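/- Let G be a group with finite generating set X, and suppose there is a subset 𝒩 ⊆ G such that (i) |𝒩 ∩ B_X(n)|/|B_X(n)| → 0 as n → ∞, and (ii) |C(g) ∩ B_X(n)|/|B_X(n)| → 0 uniformly over g ∈ G ∖ 𝒩. Then dc_X(G) = 0, and moreover the defining sequence converges to 0 (the limsup is a genuine limit). -/

import Mathlib

open Filter

/-- The ball of radius `n` in the word metric on `G` with respect to `X`. -/
def ball {G : Type*} [Group G] (X : Finset G) (n : ℕ) : Set G :=
  {g | ∃ l : List G, l.length ≤ n ∧ (∀ x ∈ l, x ∈ X ∨ x⁻¹ ∈ X) ∧ l.prod = g}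

/-- The proportion of commuting pairs in the ball of radius `n`. -/
noncomputable def dcSeq {G : Type*} [Group G] (X : Finset G) (n : ℕ) : ℝ :=
  (Nat.card {p : G × G // p.1 ∈ ball X n ∧ p.2 ∈ ball X n ∧ p.1 * p.2 = p.2 * p.1} : ℝ) /
    (Nat.card (ball X n) : ℝ) ^ 2

/-- The degree of commutativity of `G` with respect to the finite generating set `X`. -/
noncomputable def dcX {G : Type*} [Group G] (X : Finset G) : ℝ :=
  limsup (dcSeq X) atTop

/-!
Split the commuting pairs `(u, v)` of the ball `B` according to whether `u ∈ 𝒩`. Those with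
`u ∈ 𝒩` number at most `|𝒩 ∩ B| |B|`; for `u ∉ 𝒩` the partners `v` lie in `C(u) ∩ B`, which
eventually has fewer than `ε |B|` elements. So the proportion of commuting pairs is eventually at
most `|𝒩 ∩ B| / |B| + ε`, and both summands become small.
-/

open Finset

lemma tendsto_zero_of_forall_eventually_le_add {ι : Type*} {l : Filter ι} {u a : ι → ℝ}
    (hu : ∀ i, 0 ≤ u i) (ha : Tendsto a l (nhds 0)) (h : ∀ ε > 0, ∀ᶠ i in l, u i ≤ a i + ε) :
    Tendsto u l (nhds 0) := by
  refine Metric.tendsto_nhds.2 fun ε hε => ?_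
  filter_upwards [h (ε / 2) (half_pos hε), ha.eventually (gt_mem_nhds (half_pos hε))]
    with i hi hai
  rw [Real.dist_0_eq_abs, abs_of_nonneg (hu i)]
  linarith

lemma Nat.card_eq_card_of_eq_coe {α : Type*} {s : Set α} {t : Finset α} (h : s = ↑t) :
    Nat.card s = #t := by
  subst h
  exact Nat.card_eq_finsetCard t

section
variable {G : Type*} [Group G]

lemma card_commutingPairs_eq_sum [DecidableEq G] (B : Finset G) :
    #{p ∈ B ×ˢ B | p.1 * p.2 = p.2 * p.1} = ∑ u ∈ B, #{v ∈ B | u * v = v * u} := by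
  rw [card_filter, sum_product]
  simp only [card_filter]

lemma card_commutingPairs_le [DecidableEq G] (B : Finset G) (N : Set G) [DecidablePred (· ∈ N)]
    {c : ℝ} (hc₀ : 0 ≤ c) (hc : ∀ u ∈ B, u ∉ N → (#{v ∈ B | u * v = v * u} : ℝ) ≤ c) :
    (#{p ∈ B ×ˢ B | p.1 * p.2 = p.2 * p.1} : ℝ) ≤ #{u ∈ B | u ∈ N} * #B + #B * c := by
  rw [card_commutingPairs_eq_sum, Nat.cast_sum, ← sum_filter_add_sum_filter_not B (· ∈ N)]
  gcongr
  · calc _ ≤ ∑ u ∈ B with u ∈ N, (#B : ℝ) := sum_le_sum fun u _ => by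
            exact_mod_cast card_filter_le _ _
      _ = _ := by rw [sum_const, nsmul_eq_mul]
  · calc _ ≤ ∑ u ∈ B with u ∉ N, c := sum_le_sum fun u hu =>
            hc u (mem_filter.1 hu).1 (mem_filter.1 hu).2
      _ = #{u ∈ B | u ∉ N} * c := by rw [sum_const, nsmul_eq_mul]
      _ ≤ #B * c := by gcongr; exact filter_subset _ _

variable (X : Finset G)

lemma one_mem_ball (n : ℕ) : (1 : G) ∈ ball X n :=
  ⟨[], by simp, by simp, rfl⟩

open scoped Pointwise in
lemma finite_ball (n : ℕ) : (ball X n).Finite := by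
  set S : Set G := (X : Set G) ∪ (X : Set G)⁻¹
  have : Finite S := (X.finite_toSet.union X.finite_toSet.inv).to_subtype
  refine ((List.finite_length_le S n).image fun l => (l.map (↑)).prod).subset ?_
  rintro g ⟨l, hl, hS, rfl⟩
  lift l to List S using fun x hx => by simpa [S] using hS x hx
  exact ⟨l, by simpa using hl, rfl⟩

lemma dcSeq_nonneg (n : ℕ) : 0 ≤ dcSeq X n := by
  unfold dcSeq
  positivity

lemma dcSeq_le_add (N : Set G) {ε : ℝ} (hε : 0 ≤ ε) (n : ℕ)
    (hC : ∀ g ∉ N, (Nat.card ↥((Subgroup.centralizer {g} : Set G) ∩ ball X n) : ℝ) ≤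
      ε * Nat.card (ball X n)) :
    dcSeq X n ≤ Nat.card ↥(N ∩ ball X n) / Nat.card (ball X n) + ε := by
  classical
  set B := (finite_ball X n).toFinset
  have hB : Nat.card (ball X n) = #B := Nat.card_eq_card_finite_toFinset _
  have hN : Nat.card ↥(N ∩ ball X n) = #{u ∈ B | u ∈ N} :=
    Nat.card_eq_card_of_eq_coe (by ext; simp [B, and_comm])
  have hcent (g : G) :
      Nat.card ↥((Subgroup.centralizer {g} : Set G) ∩ ball X n) = #{v ∈ B | g * v = v * g} :=
    Nat.card_eq_card_of_eq_coe <| by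
      ext; simp [B, Subgroup.mem_centralizer_singleton_iff, eq_comm, and_comm]
  have hpairs : Nat.card {p : G × G // p.1 ∈ ball X n ∧ p.2 ∈ ball X n ∧ p.1 * p.2 = p.2 * p.1}
      = #{p ∈ B ×ˢ B | p.1 * p.2 = p.2 * p.1} :=
    Nat.card_eq_card_of_eq_coe (s := {p | _}) (by ext; simp [B, and_assoc])
  have hBpos : (0 : ℝ) < #B := by
    exact_mod_cast card_pos.2 ⟨1, by simpa [B] using one_mem_ball X n⟩
  rw [dcSeq, hpairs, hN, hB, div_le_iff₀ (by positivity)]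
  calc _ ≤ (#{u ∈ B | u ∈ N} : ℝ) * #B + #B * (ε * #B) :=
        card_commutingPairs_le B N (by positivity) fun u _ hu => by
          simpa only [hcent, hB] using hC u hu
    _ = _ := by field_simp

end

theorem dcX_eq_zero_of_negligible_general (G : Type*) [Group G] (X : Finset G)
    (𝒩 : Set G)
    (h1 : Tendsto (fun n =>
        (Nat.card ↥(𝒩 ∩ ball X n) : ℝ) / (Nat.card (ball X n) : ℝ))
      atTop (nhds 0))
    (h2 : ∀ ε : ℝ, 0 < ε → ∃ n₁ : ℕ, ∀ n ≥ n₁, ∀ g : G, g ∉ 𝒩 →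
      (Nat.card ↥((Subgroup.centralizer {g} : Set G) ∩ ball X n) : ℝ) <
        ε * (Nat.card (ball X n) : ℝ)) :
    dcX X = 0 ∧ Tendsto (dcSeq X) atTop (nhds 0) := by
  have hlim : Tendsto (dcSeq X) atTop (nhds 0) :=
    tendsto_zero_of_forall_eventually_le_add (dcSeq_nonneg X) h1 fun ε hε => by
      obtain ⟨n₁, hn₁⟩ := h2 ε hε
      filter_upwards [eventually_ge_atTop n₁] with n hn
      exact dcSeq_le_add X 𝒩 hε.le n fun g hg => (hn₁ n hn g hg).le
  exact ⟨hlim.limsup_eq, hlim⟩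

/-- If there is a negligible set `𝒩 ⊆ G` such that centralizers of elements outside `𝒩`
are uniformly negligible in balls, then `dc_X(G) = 0`, and in fact the sequence of
proportions of commuting pairs genuinely converges to `0`. -/
theorem dcX_eq_zero_of_negligible (G : Type*) [Group G] (X : Finset G)
    (hX : Subgroup.closure (X : Set G) = ⊤) (𝒩 : Set G)
    (h1 : Tendsto (fun n =>
        (Nat.card ↥(𝒩 ∩ ball X n) : ℝ) / (Nat.card (ball X n) : ℝ))
      atTop (nhds 0))
    (h2 : ∀ ε : ℝ, 0 < ε → ∃ n₁ : ℕ, ∀ n ≥ n₁, ∀ g : G, g ∉ 𝒩 →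
      (Nat.card ↥((Subgroup.centralizer {g} : Set G) ∩ ball X n) : ℝ) <
        ε * (Nat.card (ball X n) : ℝ)) :
    dcX X = 0 ∧ Tendsto (dcSeq X) atTop (nhds 0) :=
  dcX_eq_zero_of_negligible_general G X 𝒩 h1 h2
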